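/- Let D be a locally Egyptian integral domain with fraction field K, let L be a field extension of K, and let R be a ring with D ⊆ R ⊆ L such that R is finitely generated as a D-algebra. Then R is locally Egyptian. -/

import Mathlib

universe u

/-- A commutative ring `D` is *Egyptian* if every nonzero `d : D` is a sum of reciprocals
`d = 1/d₁ + ⋯ + 1/dₙ` of finitely many pairwise distinct nonzero elements `dᵢ` of `D`, the
equality holding in any field in which `D` embeds.  (For an integral domain `D` this is
equivalent to the usual definition, in which the equality is required in the fraction field
of `D`: such an equality holds in one field containing `D` iff it holds in all of them.) -/
def IsEgyptian (D : Type u) [CommRing D] : Prop :=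
  ∀ d : D, d ≠ 0 → ∃ s : Finset D, (∀ i ∈ s, i ≠ 0) ∧
    ∀ (K : Type u) [Field K] (φ : D →+* K), Function.Injective φ →
      φ d = ∑ i ∈ s, (φ i)⁻¹

/-- A domain `D` is *generically Egyptian* if `D[1/f]` is Egyptian for some nonzero `f : D`. -/
def IsGenericallyEgyptian (D : Type u) [CommRing D] : Prop :=
  ∃ f : D, f ≠ 0 ∧ IsEgyptian (Localization.Away f)

/-- A domain `D` is *locally Egyptian* if there is a finite set of generators of the unit
ideal of `D` such that inverting any one of them yields an Egyptian ring. -/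
def IsLocallyEgyptian (D : Type u) [CommRing D] : Prop :=
  ∃ s : Finset D, Ideal.span (s : Set D) = ⊤ ∧
    ∀ f ∈ s, IsEgyptian (Localization.Away f)

/-!
Write `R = D[t₁, …, tₙ]` inside `L` and adjoin the generators one at a time. If `B ⊆ L` is
locally Egyptian, witnessed by `f₁, …, fₘ`, then `B[b]` is locally Egyptian, witnessed by the
products `fᵢ b` and `fᵢ (1 + b)`: they still generate the unit ideal because
`fᵢ = fᵢ (1 + b) - fᵢ b`, and `B[b][1/(fᵢ g)] = B[1/fᵢ][g, g⁻¹]` for `g ∈ {b, 1 + b}`.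

So it suffices that `A[g, g⁻¹]` is Egyptian whenever `A ⊆ L` is Egyptian and `g ≠ 0`. Let `K` be
the fraction field of `A`. The exponents `m` with `g ^ m ∈ K` form a subgroup `hℤ`, and every
element of `A[g, g⁻¹]` is a `K`-combination `∑ cᵣ g ^ r` over residues `r` modulo `h`. Writing
`cᵣ = p / q` and `p = ∑ 1 / d` with `d ∈ A` gives `cᵣ g ^ r = ∑ 1 / (d q g ^ (-r))`, and
denominators coming from different residues cannot coincide, since their ratio would put some
`g ^ (r - r')` into `K`.
-/

open Finset Function

theorem eq_sum_inv_iff_mul_prod {K ι : Type*} [Field K] [DecidableEq ι] {s : Finset ι}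
    {v : ι → K} (hv : ∀ i ∈ s, v i ≠ 0) (x : K) :
    x = ∑ i ∈ s, (v i)⁻¹ ↔ x * ∏ i ∈ s, v i = ∑ i ∈ s, ∏ j ∈ s.erase i, v j := by
  have hsum : ∑ i ∈ s, ∏ j ∈ s.erase i, v j = (∑ i ∈ s, (v i)⁻¹) * ∏ i ∈ s, v i := by
    rw [sum_mul]
    refine sum_congr rfl fun i hi => ?_
    rw [← mul_prod_erase s v hi, inv_mul_cancel_left₀ (hv i hi)]
  rw [hsum, mul_left_inj' (prod_ne_zero_iff.2 hv)]

theorem map_eq_sum_inv_iff {A K : Type*} [CommRing A] [Field K] [DecidableEq A] {φ : A →+* K}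
    (hφ : Injective φ) {s : Finset A} (hs : ∀ i ∈ s, i ≠ 0) (d : A) :
    φ d = ∑ i ∈ s, (φ i)⁻¹ ↔ d * ∏ i ∈ s, i = ∑ i ∈ s, ∏ j ∈ s.erase i, j := by
  rw [eq_sum_inv_iff_mul_prod fun i hi => (map_ne_zero_iff φ hφ).2 (hs i hi), ← hφ.eq_iff]
  simp only [map_mul, map_prod, map_sum]

/-- `IsEgyptian A` only tests fields in the universe of `A`; clearing denominators turns the
condition into an identity in `A`, so one field into which `A` embeds, of any universe, suffices. -/
theorem isEgyptian_iff_of_injective {A K : Type*} [CommRing A] [Field K] {φ : A →+* K}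
    (hφ : Injective φ) :
    IsEgyptian A ↔
      ∀ d : A, d ≠ 0 → ∃ s : Finset A, (∀ i ∈ s, i ≠ 0) ∧ φ d = ∑ i ∈ s, (φ i)⁻¹ := by
  classical
  have : IsDomain A := hφ.isDomain φ
  have hfrac := IsFractionRing.injective A (FractionRing A)
  refine forall₂_congr fun d _ => exists_congr fun s => and_congr_right fun hs => ?_
  rw [map_eq_sum_inv_iff hφ hs]
  exact ⟨fun h => (map_eq_sum_inv_iff hfrac hs d).1 (h _ _ hfrac),
    fun h K' _ φ' hφ' => (map_eq_sum_inv_iff hφ' hs d).2 h⟩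

theorem isEgyptian_of_subsingleton (A : Type*) [CommRing A] [Subsingleton A] : IsEgyptian A :=
  fun d hd => (hd (Subsingleton.elim d 0)).elim

namespace Subring

theorem closure_insert_closure {R : Type*} [Ring R] (x : R) (S : Set R) :
    closure (insert x ↑(closure S)) = closure (insert x S) := by
  simp only [Set.insert_eq, closure_union, closure_eq]

theorem closure_insert_one_add {R : Type*} [Ring R] (x : R) (S : Set R) :
    closure (insert (1 + x) S) = closure (insert x S) := by
  apply le_antisymm <;> rw [closure_le, Set.insert_subset_iff] <;>
    refine ⟨?_, subset_closure.trans' (Set.subset_insert _ _)⟩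
  · exact add_mem (one_mem _) (subset_closure (Set.mem_insert _ _))
  · simpa using sub_mem (subset_closure (Set.mem_insert (1 + x) S)) (one_mem (closure _))

theorem zpow_mem {R : Type*} [DivisionRing R] {T : Subring R} {b : R} (hb : b ∈ T)
    (hb' : b⁻¹ ∈ T) (k : ℤ) : b ^ k ∈ T := by
  obtain ⟨n, rfl | rfl⟩ := Int.eq_nat_or_neg k
  · rw [zpow_natCast]
    exact pow_mem hb n
  · rw [zpow_neg, zpow_natCast, ← inv_pow]
    exact pow_mem hb' n

end Subring

section Field

variable {L : Type*} [Field L]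

namespace Localization

variable {A : Type*} [CommRing A] {ψ : A →+* L} {f : A}

theorem range_awayLift (hf : ψ f ≠ 0) :
    (awayLift ψ f (isUnit_iff_ne_zero.2 hf)).range = Subring.closure (insert (ψ f)⁻¹ ψ.range) := by
  have hv : ψ f * (ψ f)⁻¹ = 1 := mul_inv_cancel₀ hf
  apply le_antisymm
  · rintro _ ⟨z, rfl⟩
    induction z using Localization.induction_on with
    | H p =>
      obtain ⟨a, _, j, rfl⟩ := p
      rw [awayLift_mk ψ f a _ hv j]
      exact mul_mem (Subring.subset_closure (Set.mem_insert_of_mem _ ⟨a, rfl⟩))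
        (pow_mem (Subring.subset_closure (Set.mem_insert _ _)) j)
  · rw [Subring.closure_le, Set.insert_subset_iff]
    refine ⟨⟨mk 1 ⟨f ^ 1, 1, rfl⟩, ?_⟩, ?_⟩
    · rw [awayLift_mk ψ f 1 _ hv 1, map_one, one_mul, pow_one]
    · rintro _ ⟨a, rfl⟩
      exact ⟨algebraMap A _ a, IsLocalization.Away.lift_eq f _ a⟩

theorem awayLift_injective (hψ : Injective ψ) (hf : ψ f ≠ 0) :
    Injective (awayLift ψ f (isUnit_iff_ne_zero.2 hf)) := by
  have : IsDomain A := hψ.isDomain ψ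
  have hf0 : f ≠ 0 := fun h => hf (by rw [h, map_zero])
  refine (IsLocalization.lift_injective_iff _).2 fun a b => ?_
  rw [(IsLocalization.injective (Away f)
    (powers_le_nonZeroDivisors_of_noZeroDivisors hf0)).eq_iff, hψ.eq_iff]

end Localization

/-- `0⁻¹ = 0` lets `s` contain `0`, and `0` is the empty sum, so no nonvanishing conditions
are needed. -/
def Subring.IsEgyptian (B : Subring L) : Prop :=
  ∀ x ∈ B, ∃ s : Finset L, ↑s ⊆ (B : Set L) ∧ x = ∑ i ∈ s, i⁻¹

/-- `B[1/f]` is realised inside `L` as `closure (insert f⁻¹ B)`; `f = 0` is left out because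
`Localization.Away 0` is the zero ring, which is Egyptian. -/
def Subring.IsLocallyEgyptian (B : Subring L) : Prop :=
  ∃ s : Finset B, Ideal.span (s : Set B) = ⊤ ∧
    ∀ f ∈ s, f ≠ 0 → (Subring.closure (insert (f : L)⁻¹ (B : Set L))).IsEgyptian

section Transfer

variable {A : Type*} [CommRing A] {ψ : A →+* L}

theorem isEgyptian_iff_range (hψ : Injective ψ) : IsEgyptian A ↔ ψ.range.IsEgyptian := by
  classical
  rw [isEgyptian_iff_of_injective hψ]
  constructor
  · rintro h _ ⟨d, rfl⟩
    rcases eq_or_ne d 0 with rfl | hd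
    · exact ⟨∅, by simp, by simp⟩
    obtain ⟨s, -, hsum⟩ := h d hd
    refine ⟨s.map ⟨ψ, hψ⟩, ?_, by rwa [sum_map]⟩
    simp [Set.subset_def]
  · intro h d hd
    obtain ⟨s, hsψ, hsum⟩ := h (ψ d) ⟨d, rfl⟩
    refine ⟨(s.erase 0).preimage ψ hψ.injOn, fun i hi h0 => by simp [h0] at hi, ?_⟩
    rw [sum_preimage ψ _ _ (·⁻¹) fun x hx hxψ => absurd (hsψ (mem_of_mem_erase hx)) hxψ,
      sum_erase s inv_zero, hsum]

theorem isEgyptian_away_iff (hψ : Injective ψ) {f : A} (hf : ψ f ≠ 0) :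
    IsEgyptian (Localization.Away f) ↔
      (Subring.closure (insert (ψ f)⁻¹ (ψ.range : Set L))).IsEgyptian := by
  rw [isEgyptian_iff_range (Localization.awayLift_injective hψ hf), Localization.range_awayLift hf]

theorem isLocallyEgyptian_iff_range (hψ : Injective ψ) :
    IsLocallyEgyptian A ↔ ψ.range.IsLocallyEgyptian := by
  classical
  let e : A ≃+* ψ.range := .ofBijective ψ.rangeRestrict
    ⟨fun a b h => hψ (congrArg Subtype.val h), ψ.rangeRestrict_surjective⟩
  have he (a : A) : (e a : L) = ψ a := rfl
  constructor
  · rintro ⟨s, hspan, hs⟩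
    refine ⟨s.image e, by rw [coe_image, ← Ideal.map_span, hspan, Ideal.map_top], ?_⟩
    simp only [mem_image, forall_exists_index, and_imp, forall_apply_eq_imp_iff₂, he]
    intro f hf hf0
    rw [← isEgyptian_away_iff hψ ((map_ne_zero_iff _ hψ).2 fun h => hf0 (by simp [h]))]
    exact hs f hf
  · rintro ⟨s, hspan, hs⟩
    refine ⟨s.image e.symm, by rw [coe_image, ← Ideal.map_span, hspan, Ideal.map_top], ?_⟩
    simp only [mem_image, forall_exists_index, and_imp, forall_apply_eq_imp_iff₂]
    intro f hf
    rcases eq_or_ne f 0 with rfl | hf0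
    · rw [map_zero]
      have := IsLocalization.uniqueOfZeroMem (M := Submonoid.powers (0 : A))
        (S := Localization.Away (0 : A)) (Submonoid.mem_powers 0)
      exact isEgyptian_of_subsingleton _
    · have hψf : ψ (e.symm f) = f := by rw [← he, e.apply_symm_apply]
      rw [isEgyptian_away_iff hψ (by rwa [hψf, ne_eq, ZeroMemClass.coe_eq_zero]), hψf]
      exact hs f hf hf0

end Transfer

section Laurent

variable {A T : Subring L}

theorem Subfield.exists_eq_div_of_mem_closure {x : L} (hx : x ∈ Subfield.closure (A : Set L)) :
    ∃ p ∈ A, ∃ q ∈ A, q ≠ 0 ∧ x = p / q := by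
  obtain ⟨p, hp, q, hq, rfl⟩ := Subfield.mem_closure_iff.1 hx
  rw [Subring.closure_eq] at hp hq
  rcases eq_or_ne q 0 with rfl | hq0
  · exact ⟨0, zero_mem A, 1, one_mem A, one_ne_zero, by simp⟩
  · exact ⟨p, hp, q, hq, hq0, rfl⟩

theorem Subfield.exists_zpow_mem_iff_dvd (K : Subfield L) {b : L} (hb : b ≠ 0) :
    ∃ g : ℤ, ∀ m : ℤ, b ^ m ∈ K ↔ g ∣ m := by
  let G : AddSubgroup ℤ :=
    { carrier := {m | b ^ m ∈ K}
      add_mem' := fun {m n} (hm : b ^ m ∈ K) (hn : b ^ n ∈ K) =>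
        show b ^ (m + n) ∈ K by rw [zpow_add₀ hb]; exact mul_mem hm hn
      zero_mem' := show b ^ (0 : ℤ) ∈ K by rw [zpow_zero]; exact one_mem K
      neg_mem' := fun {m} (hm : b ^ m ∈ K) =>
        show b ^ (-m) ∈ K by rw [zpow_neg]; exact inv_mem hm }
  obtain ⟨g, hg⟩ := Int.subgroup_cyclic G
  refine ⟨g, fun m => ?_⟩
  rw [← Int.mem_zmultiples_iff, AddSubgroup.zmultiples_eq_closure, ← hg]
  rfl

theorem closure_subset_span_zpow {K : Subfield L} (hAK : (A : Set L) ⊆ K) {b : L} (hb : b ≠ 0)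
    {g : ℤ} (hg : ∀ m : ℤ, b ^ m ∈ K ↔ g ∣ m) :
    (Subring.closure (insert b (insert b⁻¹ (A : Set L))) : Set L) ⊆
      Submodule.span K ((b ^ ·) '' {r : ℤ | r % g = r}) := by
  set M := Submodule.span K ((b ^ ·) '' {r : ℤ | r % g = r})
  have hpow (k : ℤ) : b ^ k ∈ M := by
    have hk : b ^ (k - k % g) ∈ K := (hg _).2 Int.dvd_self_sub_emod
    have : b ^ k = (⟨_, hk⟩ : K) • b ^ (k % g) := by
      rw [Subfield.smul_def, smul_eq_mul, ← zpow_add₀ hb, sub_add_cancel]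
    rw [this]
    exact M.smul_mem _ (Submodule.subset_span ⟨k % g, Int.emod_emod k g, rfl⟩)
  have hMM : M * M ≤ M := by
    rw [Submodule.span_mul_span, Submodule.span_le]
    rintro _ ⟨_, ⟨r, -, rfl⟩, _, ⟨r', -, rfl⟩, rfl⟩
    change b ^ r * b ^ r' ∈ M
    rw [← zpow_add₀ hb]
    exact hpow _
  let M' : Subalgebra K L := M.toSubalgebra (by simpa using hpow 0)
    fun x y hx hy => hMM (Submodule.mul_mem_mul hx hy)
  refine (Subring.closure_le (t := M'.toSubring)).2 ?_
  change _ ⊆ (M : Set L)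
  rintro _ (rfl | rfl | ha)
  · simpa using hpow 1
  · simpa using hpow (-1)
  · simpa [Subfield.smul_def] using M.smul_mem (⟨_, hAK ha⟩ : K) (hpow 0)

theorem Subring.IsEgyptian.exists_mul_eq_sum_inv (hA : A.IsEgyptian) {c e : L}
    (hc : c ∈ Subfield.closure (A : Set L)) (he : e ≠ 0) :
    ∃ s : Finset L, (∀ t ∈ s, t ≠ 0 ∧ t * e ∈ A) ∧ c * e = ∑ t ∈ s, t⁻¹ := by
  classical
  obtain ⟨p, hp, q, hq, hq0, rfl⟩ := Subfield.exists_eq_div_of_mem_closure hc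
  obtain ⟨s, hsA, rfl⟩ := hA p hp
  have hk : q * e⁻¹ ≠ 0 := mul_ne_zero hq0 (inv_ne_zero he)
  refine ⟨(s.erase 0).image (· * (q * e⁻¹)), ?_, ?_⟩
  · simp only [mem_image, mem_erase]
    rintro _ ⟨d, ⟨hd0, hd⟩, rfl⟩
    refine ⟨mul_ne_zero hd0 hk, ?_⟩
    rw [mul_assoc, mul_assoc, inv_mul_cancel₀ he, mul_one]
    exact mul_mem (hsA hd) hq
  · rw [sum_image fun a _ b _ h => mul_right_cancel₀ hk h, ← sum_erase s inv_zero, sum_div,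
      sum_mul]
    refine sum_congr rfl fun d _ => ?_
    rw [mul_inv, mul_inv, inv_inv]
    ring

theorem Subring.IsEgyptian.exists_sum_inv_of_mem_span (hA : A.IsEgyptian) (hAT : A ≤ T)
    {S : Set L} (hS : ∀ e ∈ S, e ≠ 0 ∧ e⁻¹ ∈ T)
    (hSK : ∀ e₁ ∈ S, ∀ e₂ ∈ S, e₁ / e₂ ∈ Subfield.closure (A : Set L) → e₁ = e₂) {x : L}
    (hx : x ∈ Submodule.span (Subfield.closure (A : Set L)) S) :
    ∃ s : Finset L, ↑s ⊆ (T : Set L) ∧ x = ∑ t ∈ s, t⁻¹ := by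
  classical
  obtain ⟨c, E, hES, -, rfl⟩ := Submodule.mem_span_iff_exists_finset_subset.1 hx
  choose! s hs hsum using fun e (he : e ∈ E) =>
    hA.exists_mul_eq_sum_inv (c e).2 (hS e (hES he)).1
  have hdisj : (E : Set L).PairwiseDisjoint s := by
    intro e₁ he₁ e₂ he₂ hne
    refine disjoint_left.2 fun t ht₁ ht₂ => hne (hSK e₁ (hES he₁) e₂ (hES he₂) ?_)
    obtain ⟨ht0, hte₁⟩ := hs e₁ he₁ t ht₁
    obtain ⟨-, hte₂⟩ := hs e₂ he₂ t ht₂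
    rw [← mul_div_mul_left e₁ e₂ ht0]
    exact div_mem (Subfield.subset_closure hte₁) (Subfield.subset_closure hte₂)
  refine ⟨E.biUnion s, fun t ht => ?_, ?_⟩
  · obtain ⟨e, he, hte⟩ := mem_biUnion.1 ht
    have := mul_mem (hAT (hs e he t hte).2) (hS e (hES he)).2
    rwa [mul_inv_cancel_right₀ (hS e (hES he)).1] at this
  · rw [sum_biUnion hdisj]
    exact sum_congr rfl fun e he => by rw [Subfield.smul_def, smul_eq_mul, hsum e he]

theorem Subring.IsEgyptian.closure_insert_insert_inv (hA : A.IsEgyptian) {b : L} (hb : b ≠ 0) :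
    (Subring.closure (insert b (insert b⁻¹ (A : Set L)))).IsEgyptian := by
  set T := Subring.closure (insert b (insert b⁻¹ (A : Set L)))
  have hbT : b ∈ T := Subring.subset_closure (Set.mem_insert _ _)
  have hb'T : b⁻¹ ∈ T := Subring.subset_closure (Set.mem_insert_of_mem _ (Set.mem_insert _ _))
  have hAT : A ≤ T := fun a ha =>
    Subring.subset_closure (Set.mem_insert_of_mem _ (Set.mem_insert_of_mem _ ha))
  obtain ⟨g, hg⟩ := (Subfield.closure (A : Set L)).exists_zpow_mem_iff_dvd hb
  intro x hx
  refine hA.exists_sum_inv_of_mem_span hAT ?_ ?_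
    (closure_subset_span_zpow Subfield.subset_closure hb hg hx)
  · rintro _ ⟨r, -, rfl⟩
    refine ⟨zpow_ne_zero r hb, ?_⟩
    rw [← zpow_neg]
    exact Subring.zpow_mem hbT hb'T _
  · rintro _ ⟨r₁, hr₁, rfl⟩ _ ⟨r₂, hr₂, rfl⟩ h
    rw [← zpow_sub₀ hb, hg] at h
    rw [← hr₁, ← hr₂, (Int.modEq_iff_dvd.2 h).eq]

end Laurent

section Adjoin

open Subring

variable {B : Subring L}

theorem Subring.IsEgyptian.closure_insert_inv_mul {f g : L} (hf : f ∈ B) (hf0 : f ≠ 0)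
    (hg0 : g ≠ 0) (h : (closure (insert f⁻¹ (B : Set L))).IsEgyptian) :
    (closure (insert (f * g)⁻¹ ↑(closure (insert g (B : Set L))))).IsEgyptian := by
  suffices closure (insert (f * g)⁻¹ ↑(closure (insert g (B : Set L)))) =
      closure (insert g (insert g⁻¹ ↑(closure (insert f⁻¹ (B : Set L))))) by
    rw [this]
    exact h.closure_insert_insert_inv hg0
  apply le_antisymm <;> rw [closure_le, Set.insert_subset_iff]
  · set U := closure (insert g (insert g⁻¹ ↑(closure (insert f⁻¹ (B : Set L)))))
    have hBU : closure (insert f⁻¹ (B : Set L)) ≤ U := fun x hx =>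
      subset_closure (Set.mem_insert_of_mem _ (Set.mem_insert_of_mem _ hx))
    have hg'U : g⁻¹ ∈ U := subset_closure (Set.mem_insert_of_mem _ (Set.mem_insert _ _))
    have hf'U : f⁻¹ ∈ U := hBU (subset_closure (Set.mem_insert _ _))
    refine ⟨by rw [mul_inv]; exact mul_mem hf'U hg'U, closure_le.2 ?_⟩
    exact Set.insert_subset_iff.2 ⟨subset_closure (Set.mem_insert _ _),
      fun x hx => hBU (subset_closure (Set.mem_insert_of_mem _ hx))⟩
  · set V := closure (insert (f * g)⁻¹ ↑(closure (insert g (B : Set L))))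
    have hBV : closure (insert g (B : Set L)) ≤ V := fun x hx =>
      subset_closure (Set.mem_insert_of_mem _ hx)
    have hfg : (f * g)⁻¹ ∈ V := subset_closure (Set.mem_insert _ _)
    have hgV : g ∈ V := hBV (subset_closure (Set.mem_insert _ _))
    have hfV : f ∈ V := hBV (subset_closure (Set.mem_insert_of_mem _ hf))
    have hg'V : g⁻¹ ∈ V := by
      rw [show g⁻¹ = f * (f * g)⁻¹ by field_simp]
      exact mul_mem hfV hfg
    have hf'V : f⁻¹ ∈ V := by
      rw [show f⁻¹ = g * (f * g)⁻¹ by field_simp]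
      exact mul_mem hgV hfg
    refine ⟨hgV, Set.insert_subset_iff.2 ⟨hg'V, closure_le.2 ?_⟩⟩
    exact Set.insert_subset_iff.2
      ⟨hf'V, fun x hx => hBV (subset_closure (Set.mem_insert_of_mem _ hx))⟩

theorem Subring.IsLocallyEgyptian.closure_insert (hB : B.IsLocallyEgyptian) (b : L) :
    (closure (insert b (B : Set L))).IsLocallyEgyptian := by
  classical
  obtain ⟨s, hspan, hs⟩ := hB
  let ι : B →+* closure (insert b (B : Set L)) :=
    inclusion fun x hx => subset_closure (Set.mem_insert_of_mem _ hx)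
  let b' : closure (insert b (B : Set L)) := ⟨b, subset_closure (Set.mem_insert _ _)⟩
  set u := s.image (ι · * b') ∪ s.image (ι · * (1 + b'))
  refine ⟨u, ?_, ?_⟩
  · rw [eq_top_iff, ← Ideal.map_top ι, ← hspan, Ideal.map_span, Ideal.span_le]
    rintro _ ⟨f, hf, rfl⟩
    have h₁ : ι f * b' ∈ Ideal.span (u : Set _) :=
      Ideal.subset_span (mem_union_left _ (mem_image_of_mem _ hf))
    have h₂ : ι f * (1 + b') ∈ Ideal.span (u : Set _) :=
      Ideal.subset_span (mem_union_right _ (mem_image_of_mem _ hf))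
    simpa [mul_add] using sub_mem h₂ h₁
  · have hmul : ∀ f ∈ s, ∀ g : L, closure (insert g (B : Set L)) = closure (insert b B) →
        (f : L) * g ≠ 0 →
          (closure (insert ((f : L) * g)⁻¹ ↑(closure (insert b (B : Set L))))).IsEgyptian := by
      intro f hf g hg h0
      rw [← hg]
      exact IsEgyptian.closure_insert_inv_mul f.2 (left_ne_zero_of_mul h0)
        (right_ne_zero_of_mul h0) (hs f hf fun h => h0 (by simp [h]))
    simp only [u, mem_union, mem_image]
    rintro _ (⟨f, hf, rfl⟩ | ⟨f, hf, rfl⟩) h0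
    · exact hmul f hf b rfl fun h => h0 (Subtype.ext h)
    · have he : ((ι f * (1 + b') : closure (insert b (B : Set L))) : L) = f * (1 + b) := rfl
      rw [he]
      exact hmul f hf (1 + b) (closure_insert_one_add b B) fun h => h0 (Subtype.ext (he.trans h))

theorem Subring.IsLocallyEgyptian.closure_union (hB : B.IsLocallyEgyptian) (t : Finset L) :
    (closure ((B : Set L) ∪ t)).IsLocallyEgyptian := by
  classical
  induction t using Finset.induction_on with
  | empty => simpa using hB
  | insert a t _ ih =>
    rw [coe_insert, Set.union_insert, ← closure_insert_closure]
    exact ih.closure_insert a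

end Adjoin

end Field

theorem statement10_general (D : Type*) [CommRing D] (hD : IsLocallyEgyptian D)
    (L : Type u) [Field L] [Algebra D L]
    (hinj : Function.Injective (algebraMap D L))
    (R : Subalgebra D L) (hR : R.FG) :
    IsLocallyEgyptian R := by
  obtain ⟨t, rfl⟩ := hR
  refine (isLocallyEgyptian_iff_range
    (Algebra.adjoin D (t : Set L)).toSubring.subtype_injective).2 ?_
  rw [Subring.range_subtype, Algebra.adjoin_eq_ring_closure, ← RingHom.coe_range]
  exact ((isLocallyEgyptian_iff_range hinj).1 hD).closure_union t

/-- Let `D` be a locally Egyptian domain, `L` a field extension of the fraction field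
of `D` (i.e. a field in which `D` embeds), and `R` a `D`-subalgebra of `L` that is finitely
generated as a `D`-algebra.  Then `R` is locally Egyptian. -/
theorem statement10 (D : Type*) [CommRing D] [IsDomain D] (hD : IsLocallyEgyptian D)
    (L : Type u) [Field L] [Algebra D L]
    (hinj : Function.Injective (algebraMap D L))
    (R : Subalgebra D L) (hR : R.FG) :
    IsLocallyEgyptian R :=
  statement10_general D hD L hinj R hR
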